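/- Completeness of algorithmic equivalence: if Γ ⊢ M ≡ N : A (declarative equivalence) then Γ ⊢ M ⇔ N : A (algorithmic term equivalence). -/

import Mathlib

/-- Simple types: base type `i` and function types. -/
inductive Ty : Type
  | base : Ty
  | arr  : Ty → Ty → Ty

/-- Untyped lambda terms with de Bruijn indices. -/
inductive Tm : Type
  | var : ℕ → Tm
  | lam : Tm → Tm
  | app : Tm → Tm → Tm

namespace Tm

def upRen (ρ : ℕ → ℕ) : ℕ → ℕ
  | 0 => 0
  | n + 1 => ρ n + 1

/-- Renaming. -/
def rename (ρ : ℕ → ℕ) : Tm → Tm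
  | var n => var (ρ n)
  | lam M => lam (rename (upRen ρ) M)
  | app M N => app (rename ρ M) (rename ρ N)

/-- Lifting a simultaneous substitution under a binder. -/
def lift (σ : ℕ → Tm) : ℕ → Tm
  | 0 => var 0
  | n + 1 => rename Nat.succ (σ n)

/-- Simultaneous (capture-avoiding) substitution. -/
def subst (σ : ℕ → Tm) : Tm → Tm
  | var n => σ n
  | lam M => lam (subst (lift σ) M)
  | app M N => app (subst σ M) (subst σ N)

/-- Extending a substitution with a term for the top variable. -/
def scons (N : Tm) (σ : ℕ → Tm) : ℕ → Tm
  | 0 => N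
  | n + 1 => σ n

/-- Substitution of a single term for the top variable. -/
def subst1 (N M : Tm) : Tm := subst (scons N var) M

end Tm

namespace Tm

theorem upRen_comp (ρ1 ρ2 : ℕ → ℕ) : upRen ρ2 ∘ upRen ρ1 = upRen (ρ2 ∘ ρ1) := by
  funext n; cases n <;> rfl

theorem rename_rename (ρ1 ρ2 : ℕ → ℕ) (M : Tm) :
    rename ρ2 (rename ρ1 M) = rename (ρ2 ∘ ρ1) M := by
  induction M generalizing ρ1 ρ2 with
  | var n => rfl
  | lam M ih => simp only [rename, ih, upRen_comp]
  | app M N ihM ihN => simp only [rename, ihM, ihN]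

theorem lift_comp_upRen (σ : ℕ → Tm) (ρ : ℕ → ℕ) : lift σ ∘ upRen ρ = lift (σ ∘ ρ) := by
  funext n; cases n <;> rfl

theorem subst_rename (σ : ℕ → Tm) (ρ : ℕ → ℕ) (M : Tm) :
    subst σ (rename ρ M) = subst (σ ∘ ρ) M := by
  induction M generalizing σ ρ with
  | var n => rfl
  | lam M ih => simp only [rename, subst, ih, lift_comp_upRen]
  | app M N ihM ihN => simp only [rename, subst, ihM, ihN]

theorem rename_comp_lift (ρ : ℕ → ℕ) (σ : ℕ → Tm) :
    rename (upRen ρ) ∘ lift σ = lift (rename ρ ∘ σ) := by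
  funext n; cases n with
  | zero => rfl
  | succ n =>
    simp only [Function.comp, lift, rename_rename]
    congr 1

theorem rename_subst (ρ : ℕ → ℕ) (σ : ℕ → Tm) (M : Tm) :
    rename ρ (subst σ M) = subst (rename ρ ∘ σ) M := by
  induction M generalizing σ ρ with
  | var n => rfl
  | lam M ih => simp only [rename, subst, ih, rename_comp_lift]
  | app M N ihM ihN => simp only [rename, subst, ihM, ihN]

theorem lift_comp (σ1 σ2 : ℕ → Tm) :
    (fun n => subst (lift σ2) (lift σ1 n)) = lift (fun n => subst σ2 (σ1 n)) := by
  funext n; cases n with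
  | zero => rfl
  | succ n =>
    simp only [lift, subst_rename, rename_subst]
    rfl

theorem subst_subst (σ1 σ2 : ℕ → Tm) (M : Tm) :
    subst σ2 (subst σ1 M) = subst (fun n => subst σ2 (σ1 n)) M := by
  induction M generalizing σ1 σ2 with
  | var n => rfl
  | lam M ih => simp only [subst, ih, lift_comp]
  | app M N ihM ihN => simp only [subst, ihM, ihN]

theorem lift_var : lift var = var := by funext n; cases n <;> rfl

theorem subst_id (M : Tm) : subst var M = M := by
  induction M with
  | var n => rfl
  | lam M ih => simp only [subst, lift_var, ih]
  | app M N ihM ihN => simp only [subst, ihM, ihN]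

theorem subst_varComp (ρ : ℕ → ℕ) (M : Tm) : subst (fun n => var (ρ n)) M = rename ρ M := by
  induction M generalizing ρ with
  | var n => rfl
  | lam M ih =>
    simp only [subst, rename]
    rw [show lift (fun n => var (ρ n)) = fun n => var (upRen ρ n) by funext n; cases n <;> rfl, ih]
  | app M N ihM ihN => simp only [subst, rename, ihM, ihN]

/-- key: substitution commutes with subst1 -/
theorem subst_subst1 (σ : ℕ → Tm) (N M : Tm) :
    subst σ (subst1 N M) = subst1 (subst σ N) (subst (lift σ) M) := by
  simp only [subst1, subst_subst]
  congr 1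
  funext n; cases n with
  | zero => rfl
  | succ n =>
    simp only [scons, lift, subst_rename]
    rw [show (scons (subst σ N) var ∘ Nat.succ) = var from rfl, subst_id]
    rfl

theorem subst1_as_scons (σ : ℕ → Tm) (N M : Tm) :
    subst1 N (subst (lift σ) M) = subst (scons N σ) M := by
  simp only [subst1, subst_subst]
  congr 1
  funext n; cases n with
  | zero => rfl
  | succ n =>
    simp only [lift, subst_rename]
    rw [show (scons N var ∘ Nat.succ) = var from rfl, subst_id]
    rfl

end Tm

/-- Single-step weak head reduction. -/
inductive Step : Tm → Tm → Prop
  | beta {M N : Tm} : Step (Tm.app (Tm.lam M) N) (Tm.subst1 N M)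
  | app {M M' N : Tm} : Step M M' → Step (Tm.app M N) (Tm.app M' N)

/-- Multi-step weak head reduction (reflexive-transitive closure). -/
inductive MStep : Tm → Tm → Prop
  | refl {M : Tm} : MStep M M
  | trans1 {M M' M'' : Tm} : Step M M' → MStep M' M'' → MStep M M''

/-- Paths (neutral terms): a variable applied to arguments. -/
inductive IsPath : Tm → Prop
  | var {n : ℕ} : IsPath (Tm.var n)
  | app {M N : Tm} : IsPath M → IsPath (Tm.app M N)

/-- Typing contexts (de Bruijn): the `n`-th entry types variable `n`. -/
abbrev Ctx := List Ty

mutual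
  /-- Algorithmic term equivalence `Γ ⊢ M ⇔ N : A`. -/
  inductive AlgTm : Ctx → Tm → Tm → Ty → Prop
    | base {Γ : Ctx} {M N P Q : Tm} :
        MStep M P → MStep N Q → AlgPath Γ P Q Ty.base → AlgTm Γ M N Ty.base
    | arr {Γ : Ctx} {M N : Tm} {A B : Ty} :
        AlgTm (A :: Γ) (Tm.app (Tm.rename Nat.succ M) (Tm.var 0))
                       (Tm.app (Tm.rename Nat.succ N) (Tm.var 0)) B →
        AlgTm Γ M N (Ty.arr A B)

  /-- Algorithmic path equivalence `Γ ⊢ M ↔ N : A`. -/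
  inductive AlgPath : Ctx → Tm → Tm → Ty → Prop
    | var {Γ : Ctx} {n : ℕ} {A : Ty} :
        Γ[n]? = some A → AlgPath Γ (Tm.var n) (Tm.var n) A
    | app {Γ : Ctx} {M1 M2 N1 N2 : Tm} {A B : Ty} :
        AlgPath Γ M1 M2 (Ty.arr A B) → AlgTm Γ N1 N2 A →
        AlgPath Γ (Tm.app M1 N1) (Tm.app M2 N2) B
end

/-- `PathSub Δ π Γ`: π maps each variable `x:T` of Γ to a path `P` with `Δ ⊢ P ↔ P : T`. -/
def PathSub (Δ : Ctx) (π : ℕ → Tm) (Γ : Ctx) : Prop :=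
  ∀ n A, Γ[n]? = some A → AlgPath Δ (π n) (π n) A

/-- Logical equivalence `Γ ⊢ M ≈ N : A`, defined by recursion on the type. -/
def Log : Ty → Ctx → Tm → Tm → Prop
  | Ty.base => fun Γ M N => AlgTm Γ M N Ty.base
  | Ty.arr A B => fun Γ M N =>
      ∀ (Δ : Ctx) (π : ℕ → Tm), PathSub Δ π Γ →
        ∀ N1 N2, Log A Δ N1 N2 →
          Log B Δ (Tm.app (Tm.subst π M) N1) (Tm.app (Tm.subst π N) N2)

/-- `LogSub Δ σ1 σ2 Γ`: the substitutions σ1, σ2 are pointwise logically related at Γ. -/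
def LogSub (Δ : Ctx) (σ1 σ2 : ℕ → Tm) (Γ : Ctx) : Prop :=
  ∀ n A, Γ[n]? = some A → Log A Δ (σ1 n) (σ2 n)

/-- Declarative equivalence `Γ ⊢ M ≡ N : A`. -/
inductive Decl : Ctx → Tm → Tm → Ty → Prop
  | beta {Γ : Ctx} {M1 M2 N1 N2 : Tm} {A B : Ty} :
      Decl (A :: Γ) M2 N2 B → Decl Γ M1 N1 A →
      Decl Γ (Tm.app (Tm.lam M2) M1) (Tm.subst1 N1 N2) B
  | lam {Γ : Ctx} {M N : Tm} {A B : Ty} :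
      Decl (A :: Γ) M N B → Decl Γ (Tm.lam M) (Tm.lam N) (Ty.arr A B)
  | ext {Γ : Ctx} {M N : Tm} {A B : Ty} :
      Decl (A :: Γ) (Tm.app (Tm.rename Nat.succ M) (Tm.var 0))
                    (Tm.app (Tm.rename Nat.succ N) (Tm.var 0)) B →
      Decl Γ M N (Ty.arr A B)
  | var {Γ : Ctx} {n : ℕ} {A : Ty} :
      Γ[n]? = some A → Decl Γ (Tm.var n) (Tm.var n) A
  | app {Γ : Ctx} {M1 M2 N1 N2 : Tm} {A B : Ty} :
      Decl Γ M1 M2 (Ty.arr A B) → Decl Γ N1 N2 A →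
      Decl Γ (Tm.app M1 N1) (Tm.app M2 N2) B
  | symm {Γ : Ctx} {M N : Tm} {A : Ty} : Decl Γ M N A → Decl Γ N M A
  | trans {Γ : Ctx} {M N O : Tm} {A : Ty} :
      Decl Γ M N A → Decl Γ N O A → Decl Γ M O A

/-- Mutual induction principle for `AlgTm`/`AlgPath`. -/
theorem alg_ind
    {P1 P2 : Ctx → Tm → Tm → Ty → Prop}
    (hbase : ∀ {Γ : Ctx} {M N P Q : Tm}, MStep M P → MStep N Q → AlgPath Γ P Q Ty.base →
        P2 Γ P Q Ty.base → P1 Γ M N Ty.base)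
    (harr : ∀ {Γ : Ctx} {M N : Tm} {A B : Ty},
        AlgTm (A :: Γ) (Tm.app (Tm.rename Nat.succ M) (Tm.var 0))
                       (Tm.app (Tm.rename Nat.succ N) (Tm.var 0)) B →
        P1 (A :: Γ) (Tm.app (Tm.rename Nat.succ M) (Tm.var 0))
                    (Tm.app (Tm.rename Nat.succ N) (Tm.var 0)) B →
        P1 Γ M N (Ty.arr A B))
    (hvar : ∀ {Γ : Ctx} {n : ℕ} {A : Ty}, Γ[n]? = some A → P2 Γ (Tm.var n) (Tm.var n) A)
    (happ : ∀ {Γ : Ctx} {M1 M2 N1 N2 : Tm} {A B : Ty},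
        AlgPath Γ M1 M2 (Ty.arr A B) → AlgTm Γ N1 N2 A →
        P2 Γ M1 M2 (Ty.arr A B) → P1 Γ N1 N2 A → P2 Γ (Tm.app M1 N1) (Tm.app M2 N2) B) :
    (∀ {Γ M N A}, AlgTm Γ M N A → P1 Γ M N A) ∧ (∀ {Γ M N A}, AlgPath Γ M N A → P2 Γ M N A) :=
  ⟨fun h => AlgTm.rec (motive_1 := fun Γ M N A _ => P1 Γ M N A)
      (motive_2 := fun Γ M N A _ => P2 Γ M N A)
      (fun s1 s2 hp ih => hbase s1 s2 hp ih) (fun h ih => harr h ih)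
      (fun h => hvar h) (fun hp ht ih1 ih2 => happ hp ht ih1 ih2) h,
   fun h => AlgPath.rec (motive_1 := fun Γ M N A _ => P1 Γ M N A)
      (motive_2 := fun Γ M N A _ => P2 Γ M N A)
      (fun s1 s2 hp ih => hbase s1 s2 hp ih) (fun h ih => harr h ih)
      (fun h => hvar h) (fun hp ht ih1 ih2 => happ hp ht ih1 ih2) h⟩

theorem Step.substed {M M' : Tm} (h : Step M M') (σ : ℕ → Tm) :
    Step (Tm.subst σ M) (Tm.subst σ M') := by
  induction h with
  | @beta M N =>
    rw [Tm.subst_subst1]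
    exact Step.beta
  | app _ ih => exact Step.app (ih)

theorem Step.renamed {M M' : Tm} (h : Step M M') (ρ : ℕ → ℕ) :
    Step (Tm.rename ρ M) (Tm.rename ρ M') := by
  have := h.substed (fun n => Tm.var (ρ n))
  rwa [Tm.subst_varComp, Tm.subst_varComp] at this

theorem MStep.substed {M M' : Tm} (h : MStep M M') (σ : ℕ → Tm) :
    MStep (Tm.subst σ M) (Tm.subst σ M') := by
  induction h with
  | refl => exact .refl
  | trans1 s _ ih => exact .trans1 (s.substed σ) ih

theorem MStep.renamed {M M' : Tm} (h : MStep M M') (ρ : ℕ → ℕ) :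
    MStep (Tm.rename ρ M) (Tm.rename ρ M') := by
  induction h with
  | refl => exact .refl
  | trans1 s _ ih => exact .trans1 (s.renamed ρ) ih

theorem IsPath.noStep {M : Tm} (h : IsPath M) : ∀ M', ¬ Step M M' := by
  induction h with
  | var => intro M' s; cases s
  | app _ ih => intro M' s; cases s with
    | beta => cases ‹IsPath (Tm.lam _)›
    | app s' => exact ih _ s'

theorem Step.det {M M1 M2 : Tm} (h1 : Step M M1) (h2 : Step M M2) : M1 = M2 := by
  induction h1 generalizing M2 with
  | beta => cases h2 with
    | beta => rfl
    | app s => cases s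
  | app s ih => cases h2 with
    | beta => cases s
    | app s' => rw [ih s']

theorem AlgPath.isPath {Γ M N A} (h : AlgPath Γ M N A) : IsPath M ∧ IsPath N :=
  (alg_ind (P1 := fun _ _ _ _ => True) (P2 := fun _ M N _ => IsPath M ∧ IsPath N)
    (fun _ _ _ _ => trivial) (fun _ _ => trivial)
    (fun _ => ⟨.var, .var⟩) (fun _ _ ih _ => ⟨.app ih.1, .app ih.2⟩)).2 h

theorem MStep.det_path {M P Q : Tm} (h1 : MStep M P) (hP : IsPath P)
    (h2 : MStep M Q) (hQ : IsPath Q) : P = Q := by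
  induction h1 generalizing Q with
  | refl => cases h2 with
    | refl => rfl
    | trans1 s _ => exact absurd s (hP.noStep _)
  | trans1 s _ ih =>
    cases h2 with
    | refl => exact absurd s (hQ.noStep _)
    | trans1 s' h2' => exact ih hP (Step.det s s' ▸ h2') hQ

def CtxRen (ρ : ℕ → ℕ) (Γ Δ : Ctx) : Prop :=
  ∀ n A, Γ[n]? = some A → Δ[ρ n]? = some A

theorem CtxRen.up {ρ : ℕ → ℕ} {Γ Δ : Ctx} (h : CtxRen ρ Γ Δ) (A : Ty) :
    CtxRen (Tm.upRen ρ) (A :: Γ) (A :: Δ) := by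
  intro n B hn
  cases n with
  | zero => exact hn
  | succ n => exact h n B hn

theorem CtxRen.succ (Γ : Ctx) (A : Ty) : CtxRen Nat.succ Γ (A :: Γ) :=
  fun n B hn => hn

theorem rename_var0 {ρ : ℕ → ℕ} {M : Tm} :
    Tm.rename (Tm.upRen ρ) (Tm.rename Nat.succ M) = Tm.rename Nat.succ (Tm.rename ρ M) := by
  rw [Tm.rename_rename, Tm.rename_rename]
  congr 1

theorem alg_rename :
    (∀ {Γ M N A}, AlgTm Γ M N A → ∀ {Δ ρ}, CtxRen ρ Γ Δ →
        AlgTm Δ (Tm.rename ρ M) (Tm.rename ρ N) A) ∧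
    (∀ {Γ M N A}, AlgPath Γ M N A → ∀ {Δ ρ}, CtxRen ρ Γ Δ →
        AlgPath Δ (Tm.rename ρ M) (Tm.rename ρ N) A) := by
  refine alg_ind ?_ ?_ ?_ ?_
  · intro Γ M N P Q s1 s2 hp ih Δ ρ hρ
    exact AlgTm.base (s1.renamed ρ) (s2.renamed ρ) (ih hρ)
  · intro Γ M N A B h ih Δ ρ hρ
    apply AlgTm.arr
    have := ih (hρ.up A)
    simpa only [Tm.rename, rename_var0, Tm.upRen] using this
  · intro Γ n A hn Δ ρ hρ
    exact AlgPath.var (hρ n A hn)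
  · intro Γ M1 M2 N1 N2 A B hp ht ih1 ih2 Δ ρ hρ
    exact AlgPath.app (ih1 hρ) (ih2 hρ)

theorem PathSub.lift {Δ : Ctx} {π : ℕ → Tm} {Γ : Ctx} (h : PathSub Δ π Γ) (A : Ty) :
    PathSub (A :: Δ) (Tm.lift π) (A :: Γ) := by
  intro n B hn
  cases n with
  | zero => cases hn; exact AlgPath.var rfl
  | succ n => exact alg_rename.2 (h n B hn) (CtxRen.succ Δ A)

theorem subst_lift_rename {π : ℕ → Tm} {M : Tm} :
    Tm.subst (Tm.lift π) (Tm.rename Nat.succ M) = Tm.rename Nat.succ (Tm.subst π M) := by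
  rw [Tm.subst_rename, Tm.rename_subst]
  congr 1

theorem alg_pathsubst :
    (∀ {Γ M N A}, AlgTm Γ M N A → ∀ {Δ π}, PathSub Δ π Γ →
        AlgTm Δ (Tm.subst π M) (Tm.subst π N) A) ∧
    (∀ {Γ M N A}, AlgPath Γ M N A → ∀ {Δ π}, PathSub Δ π Γ →
        AlgPath Δ (Tm.subst π M) (Tm.subst π N) A) := by
  refine alg_ind ?_ ?_ ?_ ?_
  · intro Γ M N P Q s1 s2 hp ih Δ π hπ
    exact AlgTm.base (s1.substed π) (s2.substed π) (ih hπ)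
  · intro Γ M N A B h ih Δ π hπ
    apply AlgTm.arr
    have := ih (hπ.lift A)
    simpa only [Tm.subst, subst_lift_rename, Tm.lift] using this
  · intro Γ n A hn Δ π hπ
    exact hπ n A hn
  · intro Γ M1 M2 N1 N2 A B hp ht ih1 ih2 Δ π hπ
    exact AlgPath.app (ih1 hπ) (ih2 hπ)

theorem alg_det :
    (∀ {Γ M N A}, AlgPath Γ M N A → ∀ {N' A'}, AlgPath Γ M N' A' → A = A') := by
  refine (alg_ind (P1 := fun _ _ _ _ => True)
    (P2 := fun Γ M _ A => ∀ {N' A'}, AlgPath Γ M N' A' → A = A') ?_ ?_ ?_ ?_).2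
  · intros; trivial
  · intros; trivial
  · intro Γ n A hn N' A' h'
    cases h' with
    | var hn' => rw [hn] at hn'; exact (Option.some_injective _ hn')
  · intro Γ M1 M2 N1 N2 A B hp ht ih _ N' A' h'
    cases h' with
    | app hp' ht' => cases ih hp'; rfl

theorem alg_symm :
    (∀ {Γ M N A}, AlgTm Γ M N A → AlgTm Γ N M A) ∧
    (∀ {Γ M N A}, AlgPath Γ M N A → AlgPath Γ N M A) := by
  refine alg_ind ?_ ?_ ?_ ?_
  · intro Γ M N P Q s1 s2 _ ih; exact AlgTm.base s2 s1 ih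
  · intro Γ M N A B _ ih; exact AlgTm.arr ih
  · intro Γ n A hn; exact AlgPath.var hn
  · intro Γ M1 M2 N1 N2 A B _ _ ih1 ih2; exact AlgPath.app ih1 ih2

theorem alg_trans :
    (∀ {Γ M N A}, AlgTm Γ M N A → ∀ {O}, AlgTm Γ N O A → AlgTm Γ M O A) ∧
    (∀ {Γ M N A}, AlgPath Γ M N A → ∀ {O}, AlgPath Γ N O A → AlgPath Γ M O A) := by
  refine alg_ind ?_ ?_ ?_ ?_
  · intro Γ M N P Q s1 s2 hp ih O h
    cases h with
    | base s2' s3 hp' =>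
      have hQ : Q = _ := MStep.det_path s2 (hp.isPath).2 s2' (hp'.isPath).1
      exact AlgTm.base s1 s3 (ih (hQ ▸ hp'))
  · intro Γ M N A B h ih O h'
    cases h' with
    | arr h2 => exact AlgTm.arr (ih h2)
  · intro Γ n A hn O h'
    cases h' with
    | var hn' => exact AlgPath.var hn
  · intro Γ M1 M2 N1 N2 A B hp ht ih1 ih2 O h'
    cases h' with
    | app hp' ht' =>
      have hA := alg_det (alg_symm.2 hp) hp'
      cases hA
      exact AlgPath.app (ih1 hp') (ih2 ht')

theorem algTm_expand_left {Γ M M' N} (s : Step M M') (h : AlgTm Γ M' N Ty.base) :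
    AlgTm Γ M N Ty.base := by
  cases h with
  | base s1 s2 hp => exact AlgTm.base (MStep.trans1 s s1) s2 hp

theorem algTm_expand_right {Γ M N N'} (s : Step N N') (h : AlgTm Γ M N' Ty.base) :
    AlgTm Γ M N Ty.base := by
  cases h with
  | base s1 s2 hp => exact AlgTm.base s1 (MStep.trans1 s s2) hp

theorem log_expand_left : ∀ (A : Ty) {Γ M M' N}, Step M M' → Log A Γ M' N → Log A Γ M N := by
  intro A
  induction A with
  | base => intro Γ M M' N s h; exact algTm_expand_left s h
  | arr A B ihA ihB =>
    intro Γ M M' N s h Δ π hπ N1 N2 h12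
    exact ihB (Step.app (s.substed π)) (h Δ π hπ N1 N2 h12)

theorem log_expand_right : ∀ (A : Ty) {Γ M N N'}, Step N N' → Log A Γ M N' → Log A Γ M N := by
  intro A
  induction A with
  | base => intro Γ M N N' s h; exact algTm_expand_right s h
  | arr A B ihA ihB =>
    intro Γ M N N' s h Δ π hπ N1 N2 h12
    exact ihB (Step.app (s.substed π)) (h Δ π hπ N1 N2 h12)

theorem log_symm : ∀ (A : Ty) {Γ M N}, Log A Γ M N → Log A Γ N M := by
  intro A
  induction A with
  | base => intro Γ M N h; exact alg_symm.1 h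
  | arr A B ihA ihB =>
    intro Γ M N h Δ π hπ N1 N2 h12
    exact ihB (h Δ π hπ N2 N1 (ihA h12))

theorem log_trans : ∀ (A : Ty) {Γ M N O}, Log A Γ M N → Log A Γ N O → Log A Γ M O := by
  intro A
  induction A with
  | base => intro Γ M N O h1 h2; exact alg_trans.1 h1 h2
  | arr A B ihA ihB =>
    intro Γ M N O h1 h2 Δ π hπ N1 N2 h12
    have h11 : Log A Δ N1 N1 := ihA h12 (log_symm A h12)
    exact ihB (h1 Δ π hπ N1 N1 h11) (h2 Δ π hπ N1 N2 h12)

theorem pathsub_comp {Γ Δ Δ' : Ctx} {π π'} (h : PathSub Δ π Γ) (h' : PathSub Δ' π' Δ) :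
    PathSub Δ' (fun n => Tm.subst π' (π n)) Γ :=
  fun n A hn => alg_pathsubst.2 (h n A hn) h'

theorem log_monotone : ∀ (A : Ty) {Γ M N Δ π}, Log A Γ M N → PathSub Δ π Γ →
    Log A Δ (Tm.subst π M) (Tm.subst π N) := by
  intro A
  induction A with
  | base => intro Γ M N Δ π h hπ; exact alg_pathsubst.1 h hπ
  | arr A B ihA ihB =>
    intro Γ M N Δ π h hπ Δ' π' hπ' N1 N2 h12
    rw [Tm.subst_subst, Tm.subst_subst]
    exact h Δ' (fun n => Tm.subst π' (π n)) (pathsub_comp hπ hπ') N1 N2 h12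

theorem pathsub_shift (Γ : Ctx) (A : Ty) : PathSub (A :: Γ) (fun n => Tm.var (n + 1)) Γ :=
  fun n B hn => AlgPath.var hn

theorem main_lemma : ∀ (A : Ty),
    (∀ {Γ M N}, Log A Γ M N → AlgTm Γ M N A) ∧
    (∀ {Γ M N}, AlgPath Γ M N A → Log A Γ M N) := by
  intro A
  induction A with
  | base =>
    exact ⟨fun h => h, fun h => AlgTm.base MStep.refl MStep.refl h⟩
  | arr A B ihA ihB =>
    constructor
    · intro Γ M N h
      apply AlgTm.arr
      have h0 : Log A (A :: Γ) (Tm.var 0) (Tm.var 0) := ihA.2 (AlgPath.var rfl)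
      have := h (A :: Γ) (fun n => Tm.var (n + 1)) (pathsub_shift Γ A) (Tm.var 0) (Tm.var 0) h0
      rw [show (fun n => Tm.var (n + 1)) = fun n => Tm.var (Nat.succ n) from rfl,
        Tm.subst_varComp, Tm.subst_varComp] at this
      exact ihB.1 this
    · intro Γ M N hp Δ π hπ N1 N2 h12
      exact ihB.2 (AlgPath.app (alg_pathsubst.2 hp hπ) (ihA.1 h12))

theorem logsub_symm {Δ σ1 σ2 Γ} (h : LogSub Δ σ1 σ2 Γ) : LogSub Δ σ2 σ1 Γ :=
  fun n A hn => log_symm A (h n A hn)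

theorem logsub_refl_right {Δ σ1 σ2 Γ} (h : LogSub Δ σ1 σ2 Γ) : LogSub Δ σ2 σ2 Γ :=
  fun n A hn => log_trans A (log_symm A (h n A hn)) (h n A hn)

theorem logsub_ext {Δ σ1 σ2 Γ A P Q} (h : LogSub Δ σ1 σ2 Γ) (hPQ : Log A Δ P Q) :
    LogSub Δ (Tm.scons P σ1) (Tm.scons Q σ2) (A :: Γ) := by
  intro n B hn
  cases n with
  | zero => cases hn; exact hPQ
  | succ n => exact h n B hn

theorem logsub_mono {Δ σ1 σ2 Γ Δ' π} (h : LogSub Δ σ1 σ2 Γ) (hπ : PathSub Δ' π Δ) :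
    LogSub Δ' (fun n => Tm.subst π (σ1 n)) (fun n => Tm.subst π (σ2 n)) Γ :=
  fun n A hn => log_monotone A (h n A hn) hπ

theorem pathsub_id (Γ : Ctx) : PathSub Γ Tm.var Γ := fun n A hn => AlgPath.var hn

theorem subst_lam_beta (π σ : ℕ → Tm) (M : Tm) (N1 : Tm) :
    Step (Tm.app (Tm.subst π (Tm.lam (Tm.subst (Tm.lift σ) M))) N1)
         (Tm.subst (Tm.scons N1 (fun n => Tm.subst π (σ n))) M) := by
  have : Tm.subst π (Tm.lam (Tm.subst (Tm.lift σ) M)) =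
      Tm.lam (Tm.subst (Tm.lift (fun n => Tm.subst π (σ n))) M) := by
    simp only [Tm.subst, Tm.subst_subst, Tm.lift_comp]
  rw [this]
  have hb := @Step.beta (Tm.subst (Tm.lift (fun n => Tm.subst π (σ n))) M) N1
  rwa [Tm.subst1_as_scons] at hb

theorem fundamental {Γ M N A} (d : Decl Γ M N A) :
    ∀ {Δ σ1 σ2}, LogSub Δ σ1 σ2 Γ → Log A Δ (Tm.subst σ1 M) (Tm.subst σ2 N) := by
  induction d with
  | @beta Γ M1 M2 N1 N2 A B _ _ ih2 ih1 =>
    intro Δ σ1 σ2 hσ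
    have harg := ih1 hσ
    have hbody := ih2 (logsub_ext hσ harg)
    apply log_expand_left B (M' := Tm.subst (Tm.scons (Tm.subst σ1 M1) σ1) M2)
    · have hb := @Step.beta (Tm.subst (Tm.lift σ1) M2) (Tm.subst σ1 M1)
      rwa [Tm.subst1_as_scons] at hb
    · rw [Tm.subst_subst1, Tm.subst1_as_scons]
      exact hbody
  | @lam Γ M N A B _ ih =>
    intro Δ σ1 σ2 hσ Δ' π hπ N1 N2 h12
    have hσ' := logsub_ext (logsub_mono hσ hπ) h12
    have hbody := ih hσ'
    apply log_expand_left B (subst_lam_beta π σ1 M N1)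
    apply log_expand_right B (subst_lam_beta π σ2 N N2)
    exact hbody
  | @ext Γ M N A B _ ih =>
    intro Δ σ1 σ2 hσ Δ' π hπ N1 N2 h12
    have hσ' := logsub_ext (logsub_mono hσ hπ) h12
    have h := ih hσ'
    simp only [Tm.subst, Tm.subst_rename] at h
    have e1 : (Tm.scons N1 (fun n => Tm.subst π (σ1 n)) ∘ Nat.succ) =
        fun n => Tm.subst π (σ1 n) := rfl
    have e2 : (Tm.scons N2 (fun n => Tm.subst π (σ2 n)) ∘ Nat.succ) =
        fun n => Tm.subst π (σ2 n) := rfl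
    rw [e1, e2] at h
    rw [← Tm.subst_subst, ← Tm.subst_subst] at h
    exact h
  | @var Γ n A hn =>
    intro Δ σ1 σ2 hσ
    exact hσ n A hn
  | @app Γ M1 M2 N1 N2 A B _ _ ih1 ih2 =>
    intro Δ σ1 σ2 hσ
    have h := ih1 hσ Δ Tm.var (pathsub_id Δ) (Tm.subst σ1 N1) (Tm.subst σ2 N2) (ih2 hσ)
    rwa [Tm.subst_id, Tm.subst_id] at h
  | symm _ ih =>
    intro Δ σ1 σ2 hσ
    exact log_symm _ (ih (logsub_symm hσ))
  | @trans Γ M N O A _ _ ih1 ih2 =>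
    intro Δ σ1 σ2 hσ
    exact log_trans A (ih1 hσ) (ih2 (logsub_refl_right hσ))


/-- Completeness of algorithmic equivalence. -/
theorem completeness {Gamma : Ctx} {M N : Tm} {A : Ty}
    (d : Decl Gamma M N A) : AlgTm Gamma M N A := by
  have hid : LogSub Gamma Tm.var Tm.var Gamma :=
    fun n B hn => (main_lemma B).2 (AlgPath.var hn)
  have h := fundamental d hid
  rw [Tm.subst_id, Tm.subst_id] at h
  exact (main_lemma A).1 h
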